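/- arXiv:2602.13981 — 5 statements merged into one kernel-verified Lean document; each statement's English description precedes it below -/
import Mathlib

section
/- Let G = (V,E) be a finite simple undirected graph and let S, T ⊆ V be disjoint nonempty vertex sets. If there exists an S–T separator, then there exists a minimum S–T separator N(C) (where C is the set of vertices connected to S in G − N(C)) such that for every S–T separator N(C′) (with C′ the set of vertices connected to S in G − N(C′)) satisfying C ⊊ C′ one has |N(C′)| > |N(C)|; moreover this farthest minimum S–T separator is unique (both the set C and the separator N(C) are uniquely determined). -/
open scoped Classical

variable {V : Type*} [Fintype V] [DecidableEq V]

/-- The graph `G − X`: the graph obtained from `G` by deleting the vertices of `X`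
(encoded on the same vertex type: vertices of `X` become isolated). -/
def removeVerts (G : SimpleGraph V) (X : Set V) : SimpleGraph V where
  Adj u v := G.Adj u v ∧ u ∉ X ∧ v ∉ X
  symm := ⟨by rintro u v ⟨h, hu, hv⟩; exact ⟨h.symm, hv, hu⟩⟩
  loopless := ⟨by rintro v ⟨h, -, -⟩; exact G.irrefl h⟩

/-- The open neighborhood `N(C)` of a vertex set `C`. -/
def nbhd (G : SimpleGraph V) (C : Set V) : Set V :=
  {v | v ∉ C ∧ ∃ u ∈ C, G.Adj u v}

/-- The set of vertices connected to `S` in `G − X`. -/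
def reachSet (G : SimpleGraph V) (X S : Set V) : Set V :=
  {v | ∃ s ∈ S, (removeVerts G X).Reachable s v}

/-- `X` is an `S`–`T` separator: `X ⊆ V ∖ (S ∪ T)` and no path of `G − X` connects `S` to `T`. -/
def IsSeparator (G : SimpleGraph V) (S T X : Set V) : Prop :=
  Disjoint X (S ∪ T) ∧ ∀ s ∈ S, ∀ t ∈ T, ¬ (removeVerts G X).Reachable s t

/-- A minimal `S`–`T` separator. -/
def IsMinimalSep (G : SimpleGraph V) (S T X : Set V) : Prop :=
  IsSeparator G S T X ∧ ∀ X' ⊂ X, ¬ IsSeparator G S T X'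

/-- A minimum `S`–`T` separator. -/
def IsMinimumSep (G : SimpleGraph V) (S T X : Set V) : Prop :=
  IsSeparator G S T X ∧ ∀ X', IsSeparator G S T X' → X.ncard ≤ X'.ncard

/-- A separator `X` is farthest (w.r.t. `S`) if every `S`–`T` separator whose reachable set
strictly contains that of `X` is strictly larger. -/
def IsFarthest (G : SimpleGraph V) (S T X : Set V) : Prop :=
  ∀ X', IsSeparator G S T X' → reachSet G X S ⊂ reachSet G X' S → X.ncard < X'.ncard

/-- An important `S`–`T` separator. -/
def IsImportantSep (G : SimpleGraph V) (S T X : Set V) : Prop :=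
  IsMinimalSep G S T X ∧ ∀ X', IsMinimalSep G S T X' →
    reachSet G X S ⊂ reachSet G X' S → X.ncard < X'.ncard

set_option linter.unusedSectionVars false

section Aux

variable (G : SimpleGraph V) (S T : Set V)

lemma subset_reachSet (X : Set V) : S ⊆ reachSet G X S :=
  fun s hs => ⟨s, hs, SimpleGraph.Reachable.refl s⟩

lemma reach_extend {X : Set V} {u v : V} (hu : u ∈ reachSet G X S)
    (h : (removeVerts G X).Adj u v) : v ∈ reachSet G X S := by
  obtain ⟨s, hs, hr⟩ := hu
  exact ⟨s, hs, hr.trans h.reachable⟩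

lemma reach_not_mem {X : Set V} (hdis : Disjoint X S) :
    ∀ v ∈ reachSet G X S, v ∉ X := by
  rintro v ⟨s, hs, hr⟩ hvX
  obtain ⟨p⟩ := hr
  cases hq : p.reverse with
  | nil => exact hdis.ne_of_mem hvX hs rfl
  | cons h q => exact h.2.1 hvX

lemma nbhd_reach_subset {X : Set V} (hdis : Disjoint X S) :
    nbhd G (reachSet G X S) ⊆ X := by
  rintro v ⟨hv, u, hu, hadj⟩
  by_contra hvX
  exact hv (reach_extend G S hu ⟨hadj, reach_not_mem G S hdis u hu, hvX⟩)

lemma walk_stays (A : Set V) {a b : V} (p : (removeVerts G (nbhd G A)).Walk a b) :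
    a ∈ A → b ∈ A := by
  induction p with
  | nil => exact id
  | cons h p ih =>
      intro ha
      apply ih
      by_contra hv
      exact h.2.2 ⟨hv, _, ha, h.1⟩

lemma nbhd_sep (A : Set V) (hSA : S ⊆ A) (hTA : ∀ t ∈ T, t ∉ A)
    (hdis : Disjoint (nbhd G A) (S ∪ T)) : IsSeparator G S T (nbhd G A) := by
  refine ⟨hdis, fun s hs t ht hr => ?_⟩
  obtain ⟨p⟩ := hr
  exact hTA t ht (walk_stays G A p (hSA hs))

lemma walk_reach_into {X A : Set V} (hsub : reachSet G X S ⊆ A)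
    {a b : V} (p : (removeVerts G X).Walk a b) :
    a ∈ reachSet G X S → a ∈ reachSet G (nbhd G A) S →
      b ∈ reachSet G (nbhd G A) S := by
  induction p with
  | nil => exact fun _ h => h
  | @cons a c b h p ih =>
      intro haX haN
      have hcX : c ∈ reachSet G X S := reach_extend G S haX h
      have hcN : c ∈ reachSet G (nbhd G A) S :=
        reach_extend G S haN ⟨h.1, fun hm => hm.1 (hsub haX), fun hm => hm.1 (hsub hcX)⟩
      exact ih hcX hcN

lemma reach_into {X A : Set V} (hsub : reachSet G X S ⊆ A) :
    reachSet G X S ⊆ reachSet G (nbhd G A) S := by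
  rintro v ⟨s, hs, hr⟩
  obtain ⟨p⟩ := hr
  exact walk_reach_into G S hsub p ⟨s, hs, SimpleGraph.Reachable.refl s⟩
    (subset_reachSet G S _ hs)

lemma nbhd_union_subset (C C' : Set V) :
    nbhd G (C ∪ C') ⊆ nbhd G C ∪ nbhd G C' := by
  rintro v ⟨hv, u, hu, hadj⟩
  rcases hu with hu | hu
  · exact Or.inl ⟨fun h => hv (Or.inl h), u, hu, hadj⟩
  · exact Or.inr ⟨fun h => hv (Or.inr h), u, hu, hadj⟩

lemma nbhd_inter_subset (C C' : Set V) :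
    nbhd G (C ∩ C') ⊆ nbhd G C ∪ nbhd G C' := by
  rintro v ⟨hv, u, hu, hadj⟩
  by_cases hvC : v ∈ C
  · exact Or.inr ⟨fun h => hv ⟨hvC, h⟩, u, hu.2, hadj⟩
  · exact Or.inl ⟨hvC, u, hu.1, hadj⟩

lemma nbhd_both_subset (C C' : Set V) :
    nbhd G (C ∪ C') ∩ nbhd G (C ∩ C') ⊆ nbhd G C ∩ nbhd G C' := by
  rintro v ⟨⟨hv1, _⟩, ⟨_, u, hu, hadj⟩⟩
  exact ⟨⟨fun h => hv1 (Or.inl h), u, hu.1, hadj⟩,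
    ⟨fun h => hv1 (Or.inr h), u, hu.2, hadj⟩⟩

lemma nbhd_submod (C C' : Set V) :
    (nbhd G (C ∪ C')).ncard + (nbhd G (C ∩ C')).ncard ≤
      (nbhd G C).ncard + (nbhd G C').ncard := by
  rw [← Set.ncard_union_add_ncard_inter (nbhd G (C ∪ C')) (nbhd G (C ∩ C'))
      (Set.toFinite _) (Set.toFinite _),
    ← Set.ncard_union_add_ncard_inter (nbhd G C) (nbhd G C')
      (Set.toFinite _) (Set.toFinite _)]
  have h1 : nbhd G (C ∪ C') ∪ nbhd G (C ∩ C') ⊆ nbhd G C ∪ nbhd G C' :=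
    Set.union_subset (nbhd_union_subset G C C') (nbhd_inter_subset G C C')
  exact Nat.add_le_add
    (Set.ncard_le_ncard h1 (Set.toFinite _))
    (Set.ncard_le_ncard (nbhd_both_subset G C C') (Set.toFinite _))

lemma sep_t_not_reach {X : Set V} (hX : IsSeparator G S T X) :
    ∀ t ∈ T, t ∉ reachSet G X S := by
  rintro t ht ⟨s, hs, hr⟩
  exact hX.2 s hs t ht hr

lemma nbhd_reach_sep {X : Set V} (hX : IsSeparator G S T X) (hSne : S.Nonempty) :
    IsSeparator G S T (nbhd G (reachSet G X S)) := by
  have hdX : Disjoint X S := hX.1.mono_right Set.subset_union_left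
  refine nbhd_sep G S T _ (subset_reachSet G S X) (sep_t_not_reach G S T hX) ?_
  exact hX.1.mono_left (nbhd_reach_subset G S hdX)

lemma min_eq_nbhd {X : Set V} (hX : IsMinimumSep G S T X) (hSne : S.Nonempty) :
    X = nbhd G (reachSet G X S) := by
  have hdX : Disjoint X S := hX.1.1.mono_right Set.subset_union_left
  have hsep := nbhd_reach_sep G S T hX.1 hSne
  have hsub := nbhd_reach_subset G S (X := X) hdX
  exact (Set.eq_of_subset_of_ncard_le hsub (hX.2 _ hsep) (Set.toFinite _)).symm

lemma reach_subset_of_farthest {X X' : Set V}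
    (hXm : IsMinimumSep G S T X) (hXf : IsFarthest G S T X)
    (hX'm : IsMinimumSep G S T X') (hSne : S.Nonempty) :
    reachSet G X' S ⊆ reachSet G X S := by
  by_contra hns
  obtain ⟨v, hv', hv⟩ := Set.not_subset.1 hns
  set C := reachSet G X S with hC
  set C' := reachSet G X' S with hC'
  have hdX : Disjoint X S := hXm.1.1.mono_right Set.subset_union_left
  have hdX' : Disjoint X' S := hX'm.1.1.mono_right Set.subset_union_left
  have hXeq := min_eq_nbhd G S T hXm hSne
  have hX'eq := min_eq_nbhd G S T hX'm hSne
  have hk : X.ncard = X'.ncard := le_antisymm (hXm.2 _ hX'm.1) (hX'm.2 _ hXm.1)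
  have hsubU : nbhd G (C ∪ C') ⊆ X ∪ X' := by
    refine (nbhd_union_subset G C C').trans ?_
    rw [hXeq, hX'eq]
  have hsubI : nbhd G (C ∩ C') ⊆ X ∪ X' := by
    refine (nbhd_inter_subset G C C').trans ?_
    rw [hXeq, hX'eq]
  have hdisUU : Disjoint (X ∪ X') (S ∪ T) := Disjoint.union_left hXm.1.1 hX'm.1.1
  have hTnot : ∀ t ∈ T, t ∉ C ∪ C' := by
    rintro t ht (h | h)
    · exact sep_t_not_reach G S T hXm.1 t ht h
    · exact sep_t_not_reach G S T hX'm.1 t ht h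
  have hTnotI : ∀ t ∈ T, t ∉ C ∩ C' := fun t ht h =>
    sep_t_not_reach G S T hXm.1 t ht h.1
  have hY : IsSeparator G S T (nbhd G (C ∪ C')) :=
    nbhd_sep G S T _ ((subset_reachSet G S X).trans Set.subset_union_left)
      hTnot (hdisUU.mono_left hsubU)
  have hZ : IsSeparator G S T (nbhd G (C ∩ C')) :=
    nbhd_sep G S T _
      (fun s hs => ⟨subset_reachSet G S X hs, subset_reachSet G S X' hs⟩)
      hTnotI (hdisUU.mono_left hsubI)
  have hsm := nbhd_submod G C C'
  rw [← hXeq, ← hX'eq] at hsm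
  have hY1 : X.ncard ≤ (nbhd G (C ∪ C')).ncard := hXm.2 _ hY
  have hZ1 : X.ncard ≤ (nbhd G (C ∩ C')).ncard := hXm.2 _ hZ
  have hYcard : (nbhd G (C ∪ C')).ncard = X.ncard := by omega
  have hCsub : C ⊆ reachSet G (nbhd G (C ∪ C')) S :=
    reach_into G S Set.subset_union_left
  have hC'sub : C' ⊆ reachSet G (nbhd G (C ∪ C')) S :=
    reach_into G S Set.subset_union_right
  have hss : C ⊂ reachSet G (nbhd G (C ∪ C')) S :=
    ⟨hCsub, fun habs => hv (habs (hC'sub hv'))⟩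
  have := hXf _ hY hss
  omega

end Aux

/-- If disjoint nonempty `S, T` admit an `S`–`T` separator, then there is a
minimum `S`–`T` separator that is farthest, and it is unique (both the separator and its
reachable set are uniquely determined). -/
theorem farthest_minimum_separator_exists_unique
    (G : SimpleGraph V) (S T : Set V)
    (hS : S.Nonempty) (hT : T.Nonempty) (hST : Disjoint S T)
    (hex : ∃ X, IsSeparator G S T X) :
    ∃ X, (IsMinimumSep G S T X ∧ IsFarthest G S T X) ∧
      ∀ X', IsMinimumSep G S T X' ∧ IsFarthest G S T X' →
        X' = X ∧ reachSet G X' S = reachSet G X S := by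
  -- existence of a minimum separator
  have hmin : ∃ X, IsMinimumSep G S T X := by
    obtain ⟨X0, hX0⟩ := hex
    have hns : {n | ∃ X, IsSeparator G S T X ∧ X.ncard = n}.Nonempty :=
      ⟨X0.ncard, X0, hX0, rfl⟩
    obtain ⟨X, hX, hXc⟩ := Nat.sInf_mem hns
    exact ⟨X, hX, fun X' hX' => hXc ▸ Nat.sInf_le ⟨X', hX', rfl⟩⟩
  obtain ⟨Xm, hXm⟩ := hmin
  -- choose a minimum separator with maximal reach set cardinality
  set t : Set ℕ := {n | ∃ X, IsMinimumSep G S T X ∧ (reachSet G X S).ncard = n} with ht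
  have htne : t.Nonempty := ⟨_, Xm, hXm, rfl⟩
  have htbdd : BddAbove t := by
    refine ⟨Fintype.card V, ?_⟩
    rintro n ⟨X, _, rfl⟩
    refine (Set.ncard_le_ncard (Set.subset_univ (reachSet G X S)) Set.finite_univ).trans ?_
    rw [Set.ncard_univ, Nat.card_eq_fintype_card]
  obtain ⟨X, hXmin, hXc⟩ := Nat.sSup_mem htne htbdd
  have hXf : IsFarthest G S T X := by
    intro X' hX' hss
    by_contra hlt
    push_neg at hlt
    have hX'min : IsMinimumSep G S T X' :=
      ⟨hX', fun X'' hX'' => hlt.trans (hXmin.2 _ hX'')⟩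
    have h1 : (reachSet G X' S).ncard ≤ (reachSet G X S).ncard :=
      hXc ▸ le_csSup htbdd ⟨X', hX'min, rfl⟩
    have h2 : (reachSet G X S).ncard < (reachSet G X' S).ncard :=
      Set.ncard_lt_ncard hss (Set.toFinite _)
    omega
  refine ⟨X, ⟨hXmin, hXf⟩, ?_⟩
  rintro X' ⟨hX'min, hX'f⟩
  have h1 : reachSet G X' S ⊆ reachSet G X S :=
    reach_subset_of_farthest G S T hXmin hXf hX'min hS
  have h2 : reachSet G X S ⊆ reachSet G X' S :=
    reach_subset_of_farthest G S T hX'min hX'f hXmin hS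
  have hre : reachSet G X' S = reachSet G X S := Set.Subset.antisymm h1 h2
  refine ⟨?_, hre⟩
  rw [min_eq_nbhd G S T hX'min hS, min_eq_nbhd G S T hXmin hS, hre]
end

section
/- Let G = (V,E) be a finite simple undirected graph, S, T ⊆ V disjoint vertex sets, and let N(C) be an important S–T separator. Then for any vertex set S′ with S ⊆ S′ ⊆ C, N(C) is also an important S′–T separator. -/
open scoped Classical

variable {V : Type*} [Fintype V] [DecidableEq V]

lemma removeVerts_anti (G : SimpleGraph V) {X Y : Set V} (h : X ⊆ Y) :
    removeVerts G Y ≤ removeVerts G X := by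
  rintro u v ⟨ha, hu, hv⟩
  exact ⟨ha, fun c => hu (h c), fun c => hv (h c)⟩

lemma reachSet_anti (G : SimpleGraph V) {X Y : Set V} (h : X ⊆ Y) (S : Set V) :
    reachSet G Y S ⊆ reachSet G X S := by
  rintro v ⟨s, hs, hr⟩
  exact ⟨s, hs, hr.mono (removeVerts_anti G h)⟩

lemma walk_end_cases {G : SimpleGraph V} {X : Set V} {s v : V}
    (p : (removeVerts G X).Walk s v) : v = s ∨ v ∉ X := by
  induction p with
  | nil => exact Or.inl rfl
  | cons h q ih =>
    rcases ih with rfl | hv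
    · exact Or.inr h.2.2
    · exact Or.inr hv

lemma not_mem_of_mem_reachSet {G : SimpleGraph V} {X S : Set V}
    (hdisj : Disjoint X S) {v : V} (hv : v ∈ reachSet G X S) : v ∉ X := by
  obtain ⟨s, hs, ⟨p⟩⟩ := hv
  rcases walk_end_cases p with rfl | h
  · exact fun hvX => (Set.disjoint_left.mp hdisj hvX) hs
  · exact h

lemma walk_transfer {G : SimpleGraph V} {X X' : Set V} :
    ∀ {a b : V} (p : (removeVerts G X).Walk a b),
      (∀ u ∈ p.support, u ∉ X') → (removeVerts G X').Reachable a b := by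
  intro a b p
  induction p with
  | nil => exact fun _ => SimpleGraph.Reachable.refl _
  | @cons a c b h q ih =>
    intro hsup
    have ha : a ∉ X' := hsup a (by simp)
    have hc : c ∉ X' := hsup c (by simp)
    have hadj : (removeVerts G X').Adj a c := ⟨h.1, ha, hc⟩
    exact hadj.reachable.trans
      (ih fun u hu => hsup u (by simp [hu]))

lemma reach_transfer {G : SimpleGraph V} {X X' S : Set V}
    (h : ∀ v ∈ reachSet G X S, v ∉ X') :
    reachSet G X S ⊆ reachSet G X' S := by
  rintro v ⟨s, hs, ⟨p⟩⟩
  refine ⟨s, hs, walk_transfer p ?_⟩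
  intro u hu
  exact h u ⟨s, hs, ⟨p.takeUntil u hu⟩⟩

lemma exists_minimal_sep (G : SimpleGraph V) (S T : Set V) :
    ∀ n (X : Set V), X.ncard = n → IsSeparator G S T X →
      ∃ X' ⊆ X, IsMinimalSep G S T X' := by
  intro n
  induction n using Nat.strong_induction_on with
  | _ n ih =>
    intro X hn hX
    by_cases hmin : ∀ Y ⊂ X, ¬ IsSeparator G S T Y
    · exact ⟨X, subset_rfl, hX, hmin⟩
    · push_neg at hmin
      obtain ⟨Y, hYX, hY⟩ := hmin
      obtain ⟨X', hX'Y, hX'⟩ :=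
        ih Y.ncard (hn ▸ Set.ncard_lt_ncard hYX X.toFinite) Y rfl hY
      exact ⟨X', hX'Y.trans hYX.subset, hX'⟩

/-- An important `S`–`T` separator `N(C)` remains an important `S'`–`T`
separator for every `S'` with `S ⊆ S' ⊆ C`. -/
theorem important_separator_source_expansion
    (G : SimpleGraph V) (S T : Set V) (hST : Disjoint S T)
    (X : Set V) (hX : IsImportantSep G S T X)
    (S' : Set V) (hSS' : S ⊆ S') (hS'C : S' ⊆ reachSet G X S) :
    IsImportantSep G S' T X := by
  obtain ⟨⟨⟨hdisj, hsep⟩, hmin⟩, himp⟩ := hX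
  have hXS : Disjoint X S := hdisj.mono_right Set.subset_union_left
  have hXT : Disjoint X T := hdisj.mono_right Set.subset_union_right
  have hXC : ∀ v ∈ reachSet G X S, v ∉ X := fun v hv => not_mem_of_mem_reachSet hXS hv
  -- X is an S'–T separator
  have hsep' : IsSeparator G S' T X := by
    constructor
    · rw [Set.disjoint_union_right]
      exact ⟨Set.disjoint_left.mpr fun v hvX hvS' => hXC v (hS'C hvS') hvX, hXT⟩
    · rintro s' hs' t ht hr
      obtain ⟨s, hs, hr'⟩ := hS'C hs'
      exact hsep s hs t ht (hr'.trans hr)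
  -- reachSet G X S' = reachSet G X S
  have hCeq : reachSet G X S' = reachSet G X S := by
    apply Set.Subset.antisymm
    · rintro v ⟨s', hs', hr⟩
      obtain ⟨s, hs, hr'⟩ := hS'C hs'
      exact ⟨s, hs, hr'.trans hr⟩
    · rintro v ⟨s, hs, hr⟩
      exact ⟨s, hSS' hs, hr⟩
  constructor
  · refine ⟨hsep', fun Y hYX hY => ?_⟩
    apply hmin Y hYX
    refine ⟨hY.1.mono_right (Set.union_subset_union_left T hSS'), ?_⟩
    exact fun s hs t ht => hY.2 s (hSS' hs) t ht
  · intro X' hX' hss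
    rw [hCeq] at hss
    have hX'S' : Disjoint X' S' := hX'.1.1.mono_right Set.subset_union_left
    -- every vertex of reachSet G X S avoids X'
    have havoid : ∀ v ∈ reachSet G X S, v ∉ X' := by
      intro v hv
      exact not_mem_of_mem_reachSet hX'S' (hss.subset hv)
    have hsub1 : reachSet G X S ⊆ reachSet G X' S := reach_transfer havoid
    have hsub2 : reachSet G X' S' ⊆ reachSet G X' S := by
      rintro v ⟨s', hs', hr⟩
      obtain ⟨s, hs, hr'⟩ := hsub1 (hS'C hs')
      exact ⟨s, hs, hr'.trans hr⟩
    have hss2 : reachSet G X S ⊂ reachSet G X' S := hss.trans_subset hsub2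
    -- X' is an S–T separator
    have hX'sep : IsSeparator G S T X' := by
      refine ⟨hX'.1.1.mono_right (Set.union_subset_union_left T hSS'), ?_⟩
      exact fun s hs t ht => hX'.1.2 s (hSS' hs) t ht
    obtain ⟨X'', hX''sub, hX''min⟩ := exists_minimal_sep G S T X'.ncard X' rfl hX'sep
    have hsub3 : reachSet G X' S ⊆ reachSet G X'' S := reachSet_anti G hX''sub S
    have hss3 : reachSet G X S ⊂ reachSet G X'' S := hss2.trans_subset hsub3
    calc X.ncard < X''.ncard := himp X'' hX''min hss3
      _ ≤ X'.ncard := Set.ncard_le_ncard hX''sub X'.toFinite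
end

section
/- Let G = (V,E) be a finite simple undirected graph, S, T ⊆ V disjoint vertex sets, and k a nonnegative integer. Then the number of important S–T separators of size at most k is at most 4^k. -/
open scoped Classical

variable {V : Type*} [Fintype V] [DecidableEq V]

set_option linter.unusedSectionVars false
set_option linter.unusedVariables false

namespace ImpSep

variable {G : SimpleGraph V} {S T X Y A B : Set V}

lemma removeVerts_mono (G : SimpleGraph V) (h : X ⊆ Y) : removeVerts G Y ≤ removeVerts G X :=
  fun _ _ ⟨ha, hu, hv⟩ => ⟨ha, fun hh => hu (h hh), fun hh => hv (h hh)⟩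

lemma reachSet_mono (G : SimpleGraph V) (S : Set V) (h : X ⊆ Y) :
    reachSet G Y S ⊆ reachSet G X S := by
  rintro v ⟨s, hs, hr⟩
  exact ⟨s, hs, hr.mono (removeVerts_mono G h)⟩

lemma subset_reachSet (G : SimpleGraph V) (X S : Set V) : S ⊆ reachSet G X S :=
  fun s hs => ⟨s, hs, SimpleGraph.Reachable.refl s⟩

lemma walk_not_mem {a b : V} (w : (removeVerts G X).Walk a b) (ha : a ∉ X) : b ∉ X := by
  induction w with
  | nil => exact ha
  | cons h p ih => exact ih h.2.2

lemma reachSet_disjoint (hXS : Disjoint X S) : reachSet G X S ∩ X = ∅ := by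
  ext v
  simp only [Set.mem_inter_iff, Set.mem_empty_iff_false, iff_false, not_and]
  rintro ⟨s, hs, hr⟩ hvX
  obtain ⟨w⟩ := hr
  exact walk_not_mem w (fun h => hXS.ne_of_mem h hs rfl) hvX

lemma not_mem_of_reach (hXS : Disjoint X S) (hv : v ∈ reachSet G X S) : v ∉ X := by
  intro h
  have := reachSet_disjoint (G := G) hXS
  exact absurd (Set.mem_inter hv h) (by simp [this])

lemma nbhd_reach_subset (hXS : Disjoint X S) : nbhd G (reachSet G X S) ⊆ X := by
  rintro x ⟨hxC, u, huC, hadj⟩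
  by_contra hxX
  obtain ⟨s, hs, hr⟩ := huC
  refine hxC ⟨s, hs, hr.trans (SimpleGraph.Adj.reachable ?_)⟩
  exact ⟨hadj, not_mem_of_reach hXS ⟨s, hs, hr⟩, hxX⟩

lemma walk_stay {a b : V} (w : (removeVerts G (nbhd G A)).Walk a b) (ha : a ∈ A) : b ∈ A := by
  induction w with
  | nil => exact ha
  | cons h p ih =>
    rename_i u v _
    refine ih ?_
    by_contra hv
    exact h.2.2 ⟨hv, u, ha, h.1⟩

lemma sep_T_disjoint (hsep : IsSeparator G S T X) : reachSet G X S ∩ T = ∅ := by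
  ext v
  simp only [Set.mem_inter_iff, Set.mem_empty_iff_false, iff_false, not_and]
  rintro ⟨s, hs, hr⟩ hvT
  exact hsep.2 s hs v hvT hr

lemma sep_of_closed (hSA : S ⊆ A) (hAT : A ∩ T = ∅)
    (hd : Disjoint (nbhd G A) (S ∪ T)) : IsSeparator G S T (nbhd G A) := by
  refine ⟨hd, fun s hs t ht hr => ?_⟩
  obtain ⟨w⟩ := hr
  have : t ∈ A := walk_stay w (hSA hs)
  exact absurd (Set.mem_inter this ht) (by simp [hAT])

lemma reach_nbhd_subset (hSA : S ⊆ A) : reachSet G (nbhd G A) S ⊆ A := by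
  rintro v ⟨s, hs, hr⟩
  obtain ⟨w⟩ := hr
  exact walk_stay w (hSA hs)

lemma walk_support_reach {a b : V} (w : (removeVerts G X).Walk a b)
    (ha : a ∈ reachSet G X S) : ∀ x ∈ w.support, x ∈ reachSet G X S := by
  induction w with
  | nil => intro x hx; simp at hx; subst hx; exact ha
  | cons h p ih =>
    rename_i u v _
    intro x hx
    obtain ⟨s, hs, hr⟩ := ha
    simp only [SimpleGraph.Walk.support_cons, List.mem_cons] at hx
    rcases hx with rfl | hx
    · exact ⟨s, hs, hr⟩
    · exact ih ⟨s, hs, hr.trans h.reachable⟩ x hx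

lemma reachable_transfer {a b : V} (w : (removeVerts G X).Walk a b)
    (hsup : ∀ x ∈ w.support, x ∈ A) : (removeVerts G (nbhd G A)).Reachable a b := by
  induction w with
  | nil => exact SimpleGraph.Reachable.refl _
  | cons h p ih =>
    rename_i u v _
    have hu : u ∈ A := hsup u (by simp)
    have hv : v ∈ A := hsup v (by simp)
    have hadj : (removeVerts G (nbhd G A)).Adj u v :=
      ⟨h.1, fun hh => hh.1 hu, fun hh => hh.1 hv⟩
    refine hadj.reachable.trans ?_
    exact ih (fun x hx => hsup x (by simp [hx]))

lemma reachSet_subset_reach_nbhd (hAB : reachSet G X S ⊆ B) :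
    reachSet G X S ⊆ reachSet G (nbhd G B) S := by
  rintro v hv
  obtain ⟨s, hs, hr⟩ := hv
  obtain ⟨w⟩ := hr
  exact ⟨s, hs, reachable_transfer w
    (fun x hx => hAB (walk_support_reach w ⟨s, hs, SimpleGraph.Reachable.refl s⟩ x hx))⟩



lemma walk_to_C {x : V} (hsep : IsSeparator G S T X) (hx : x ∈ X)
    (hxn : x ∉ nbhd G (reachSet G X S)) {a b : V}
    (w : (removeVerts G (X \ {x})).Walk a b) (ha : a ∈ reachSet G X S) :
    b ∈ reachSet G X S := by
  have hXS : Disjoint X S := hsep.1.mono_right Set.subset_union_left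
  induction w with
  | nil => exact ha
  | cons h p ih =>
    rename_i u v _
    refine ih ?_
    by_cases hvX : v ∈ X
    · have hvx : v = x := by
        have := h.2.2
        simp only [Set.mem_diff, Set.mem_singleton_iff, not_and, not_not] at this
        exact this hvX
      subst hvx
      have hvC : v ∉ reachSet G X S := fun hc => (not_mem_of_reach hXS hc) hvX
      exact absurd ⟨hvC, u, ha, h.1⟩ hxn
    · obtain ⟨s, hs, hr⟩ := ha
      have huX : u ∉ X := not_mem_of_reach hXS ⟨s, hs, hr⟩
      exact ⟨s, hs, hr.trans (SimpleGraph.Adj.reachable (⟨h.1, huX, hvX⟩ :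
        (removeVerts G X).Adj u v))⟩

lemma minimal_eq_nbhd (h : IsMinimalSep G S T X) : X = nbhd G (reachSet G X S) := by
  have hXS : Disjoint X S := h.1.1.mono_right Set.subset_union_left
  refine Set.Subset.antisymm ?_ (nbhd_reach_subset hXS)
  intro x hx
  by_contra hxn
  refine h.2 (X \ {x}) (Set.sdiff_singleton_ssubset.mpr hx) ?_
  · refine ⟨h.1.1.mono_left Set.diff_subset, fun s hs t ht hr => ?_⟩
    obtain ⟨w⟩ := hr
    have : t ∈ reachSet G X S := walk_to_C h.1 hx hxn w (subset_reachSet G X S hs)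
    exact absurd (Set.mem_inter this ht) (by simp [sep_T_disjoint h.1])

lemma exists_minimal_subset (h : IsSeparator G S T X) :
    ∃ Z ⊆ X, IsMinimalSep G S T Z := by
  have aux : ∀ n (Y : Set V), Y.ncard ≤ n → IsSeparator G S T Y →
      ∃ Z ⊆ Y, IsMinimalSep G S T Z := by
    intro n
    induction n with
    | zero =>
      intro Y hY hsep
      refine ⟨Y, subset_rfl, hsep, fun X' hX' hsep' => ?_⟩
      have := Set.ncard_lt_ncard hX' (Set.toFinite Y)
      omega
    | succ n ih =>
      intro Y hY hsep
      by_cases hm : ∀ X' ⊂ Y, ¬ IsSeparator G S T X'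
      · exact ⟨Y, subset_rfl, hsep, hm⟩
      · push_neg at hm
        obtain ⟨X', hX'Y, hX'⟩ := hm
        have hlt : X'.ncard < Y.ncard := Set.ncard_lt_ncard hX'Y (Set.toFinite Y)
        obtain ⟨Z, hZ, hZm⟩ := ih X' (by omega) hX'
        exact ⟨Z, hZ.trans hX'Y.subset, hZm⟩
  exact aux X.ncard X le_rfl h

lemma minimum_is_minimal (h : IsSeparator G S T X)
    (hmin : ∀ Y, IsSeparator G S T Y → X.ncard ≤ Y.ncard) : IsMinimalSep G S T X := by
  refine ⟨h, fun X' hX' hsep => ?_⟩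
  exact absurd (hmin X' hsep) (not_le.mpr (Set.ncard_lt_ncard hX' (Set.toFinite X)))

lemma nbhd_union_subset : nbhd G (A ∪ B) ⊆ nbhd G A ∪ nbhd G B := by
  rintro v ⟨hv, u, hu, hadj⟩
  rcases hu with hu | hu
  · exact Or.inl ⟨fun hc => hv (Or.inl hc), u, hu, hadj⟩
  · exact Or.inr ⟨fun hc => hv (Or.inr hc), u, hu, hadj⟩

lemma nbhd_inter_subset : nbhd G (A ∩ B) ⊆ nbhd G A ∪ nbhd G B := by
  rintro v ⟨hv, u, hu, hadj⟩
  by_cases hvA : v ∈ A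
  · exact Or.inr ⟨fun hc => hv ⟨hvA, hc⟩, u, hu.2, hadj⟩
  · exact Or.inl ⟨hvA, u, hu.1, hadj⟩

lemma submodular (G : SimpleGraph V) (A B : Set V) :
    (nbhd G (A ∩ B)).ncard + (nbhd G (A ∪ B)).ncard ≤ (nbhd G A).ncard + (nbhd G B).ncard := by
  have h1 : nbhd G (A ∩ B) ∪ nbhd G (A ∪ B) ⊆ nbhd G A ∪ nbhd G B :=
    Set.union_subset nbhd_inter_subset nbhd_union_subset
  have h2 : nbhd G (A ∩ B) ∩ nbhd G (A ∪ B) ⊆ nbhd G A ∩ nbhd G B := by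
    rintro v ⟨⟨hv1, u1, hu1, ha1⟩, ⟨hv2, u2, hu2, ha2⟩⟩
    have hvA : v ∉ A := fun hc => hv2 (Or.inl hc)
    have hvB : v ∉ B := fun hc => hv2 (Or.inr hc)
    exact ⟨⟨hvA, u1, hu1.1, ha1⟩, ⟨hvB, u1, hu1.2, ha1⟩⟩
  calc (nbhd G (A ∩ B)).ncard + (nbhd G (A ∪ B)).ncard
      = (nbhd G (A ∩ B) ∪ nbhd G (A ∪ B)).ncard + (nbhd G (A ∩ B) ∩ nbhd G (A ∪ B)).ncard :=
        (Set.ncard_union_add_ncard_inter _ _ (Set.toFinite _) (Set.toFinite _)).symm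
    _ ≤ (nbhd G A ∪ nbhd G B).ncard + (nbhd G A ∩ nbhd G B).ncard :=
        Nat.add_le_add (Set.ncard_le_ncard h1 (Set.toFinite _))
          (Set.ncard_le_ncard h2 (Set.toFinite _))
    _ = (nbhd G A).ncard + (nbhd G B).ncard :=
        Set.ncard_union_add_ncard_inter _ _ (Set.toFinite _) (Set.toFinite _)


section Farthest

variable (hST : Disjoint S T) {Xs : Set V}
  (hXs : IsSeparator G S T Xs)
  (hmin : ∀ Y, IsSeparator G S T Y → Xs.ncard ≤ Y.ncard)
  (hfar : ∀ Y, IsSeparator G S T Y → Y.ncard = Xs.ncard →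
    (reachSet G Y S).ncard ≤ (reachSet G Xs S).ncard)

lemma sep_nbhd_inter (hY : IsSeparator G S T Y) (hXs : IsSeparator G S T Xs) :
    IsSeparator G S T (nbhd G (reachSet G Y S ∩ reachSet G Xs S)) := by
  refine sep_of_closed (Set.subset_inter (subset_reachSet G Y S) (subset_reachSet G Xs S))
    ?_ ?_
  · rw [Set.inter_assoc]
    rw [sep_T_disjoint hXs]
    simp
  · have h1 : nbhd G (reachSet G Y S ∩ reachSet G Xs S) ⊆ Y ∪ Xs :=
      nbhd_inter_subset.trans (Set.union_subset_union
        (nbhd_reach_subset (hY.1.mono_right Set.subset_union_left))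
        (nbhd_reach_subset (hXs.1.mono_right Set.subset_union_left)))
    exact Set.disjoint_of_subset_left h1 (Set.disjoint_union_left.mpr ⟨hY.1, hXs.1⟩)

lemma sep_nbhd_union (hY : IsSeparator G S T Y) (hXs : IsSeparator G S T Xs) :
    IsSeparator G S T (nbhd G (reachSet G Y S ∪ reachSet G Xs S)) := by
  refine sep_of_closed ((subset_reachSet G Y S).trans Set.subset_union_left) ?_ ?_
  · rw [Set.union_inter_distrib_right, sep_T_disjoint hY, sep_T_disjoint hXs]
    simp
  · have h1 : nbhd G (reachSet G Y S ∪ reachSet G Xs S) ⊆ Y ∪ Xs :=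
      nbhd_union_subset.trans (Set.union_subset_union
        (nbhd_reach_subset (hY.1.mono_right Set.subset_union_left))
        (nbhd_reach_subset (hXs.1.mono_right Set.subset_union_left)))
    exact Set.disjoint_of_subset_left h1 (Set.disjoint_union_left.mpr ⟨hY.1, hXs.1⟩)

include hXs hmin hfar in
/-- Lemma A: the reach set of any minimum separator is inside that of the farthest one. -/
lemma min_reach_subset (hY : IsSeparator G S T Y) (hYcard : Y.ncard = Xs.ncard) :
    reachSet G Y S ⊆ reachSet G Xs S := by
  set D := reachSet G Y S with hD
  set Cs := reachSet G Xs S with hCs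
  have hsub := submodular G D Cs
  have hnD : nbhd G D ⊆ Y := nbhd_reach_subset (hY.1.mono_right Set.subset_union_left)
  have hnC : nbhd G Cs ⊆ Xs := nbhd_reach_subset (hXs.1.mono_right Set.subset_union_left)
  have h1 : Xs.ncard ≤ (nbhd G (D ∩ Cs)).ncard := hmin _ (sep_nbhd_inter hY hXs)
  have h2 : (nbhd G D).ncard ≤ Xs.ncard := hYcard ▸ Set.ncard_le_ncard hnD (Set.toFinite Y)
  have h3 : (nbhd G Cs).ncard ≤ Xs.ncard := Set.ncard_le_ncard hnC (Set.toFinite Xs)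
  have hU : (nbhd G (D ∪ Cs)).ncard = Xs.ncard :=
    le_antisymm (by omega) (hmin _ (sep_nbhd_union hY hXs))
  have hrU : reachSet G (nbhd G (D ∪ Cs)) S = D ∪ Cs := by
    refine Set.Subset.antisymm
      (reach_nbhd_subset ((subset_reachSet G Y S).trans Set.subset_union_left)) ?_
    exact Set.union_subset (reachSet_subset_reach_nbhd Set.subset_union_left)
      (reachSet_subset_reach_nbhd Set.subset_union_right)
  have hle : (D ∪ Cs).ncard ≤ Cs.ncard := by
    have := hfar _ (sep_nbhd_union hY hXs) hU
    rwa [hrU] at this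
  have : Cs = D ∪ Cs := Set.eq_of_subset_of_ncard_le Set.subset_union_right hle (Set.toFinite _)
  show D ⊆ Cs
  rw [this]
  exact Set.subset_union_left

include hXs hmin hfar in
/-- Lemma B: the reach set of the farthest min separator is inside that of any important one. -/
lemma important_reach_supset (hX : IsImportantSep G S T X) :
    reachSet G Xs S ⊆ reachSet G X S := by
  set C := reachSet G X S with hC
  set Cs := reachSet G Xs S with hCs
  by_contra hnot
  have hsub := submodular G C Cs
  have hnC : nbhd G C = X := (minimal_eq_nbhd hX.1).symm
  have hnCs : nbhd G Cs ⊆ Xs := nbhd_reach_subset (hXs.1.mono_right Set.subset_union_left)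
  have h1 : Xs.ncard ≤ (nbhd G (C ∩ Cs)).ncard := hmin _ (sep_nbhd_inter hX.1.1 hXs)
  have h3 : (nbhd G Cs).ncard ≤ Xs.ncard := Set.ncard_le_ncard hnCs (Set.toFinite Xs)
  have hWle : (nbhd G (C ∪ Cs)).ncard ≤ X.ncard := by
    rw [hnC] at hsub; omega
  have hsepW : IsSeparator G S T (nbhd G (C ∪ Cs)) := sep_nbhd_union hX.1.1 hXs
  obtain ⟨Z, hZW, hZmin⟩ := exists_minimal_subset hsepW
  have hrW : C ∪ Cs ⊆ reachSet G (nbhd G (C ∪ Cs)) S :=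
    Set.union_subset (reachSet_subset_reach_nbhd Set.subset_union_left)
      (reachSet_subset_reach_nbhd Set.subset_union_right)
  have hrZ : C ∪ Cs ⊆ reachSet G Z S :=
    hrW.trans (reachSet_mono G S hZW)
  have hstrict : C ⊂ reachSet G Z S := by
    refine ⟨Set.subset_union_left.trans hrZ, fun hback => ?_⟩
    exact hnot (Set.subset_union_right.trans (hrZ.trans hback))
  have := hX.2 Z hZmin hstrict
  have hZle : Z.ncard ≤ (nbhd G (C ∪ Cs)).ncard := Set.ncard_le_ncard hZW (Set.toFinite _)
  omega

include hXs in
lemma walk_analysis {v a b : V} (hv : v ∈ Xs)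
    (w : (removeVerts G (Xs \ {v})).Walk a b)
    (ha : a ∈ reachSet G Xs S ∨ (a ∉ reachSet G Xs S ∪ (Xs \ {v}) ∧
      (removeVerts G (reachSet G Xs S ∪ (Xs \ {v}))).Reachable v a)) :
    b ∈ reachSet G Xs S ∨ (removeVerts G (reachSet G Xs S ∪ (Xs \ {v}))).Reachable v b := by
  set Cs := reachSet G Xs S with hCs
  have hdCX : ∀ x ∈ Cs, x ∉ Xs := fun x hx =>
    not_mem_of_reach (hXs.1.mono_right Set.subset_union_left) hx
  induction w with
  | nil => rcases ha with h | h; exacts [Or.inl h, Or.inr h.2]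
  | cons h p ih =>
    rename_i x y _
    rcases ha with hxC | ⟨hxM, hreach⟩
    · by_cases hyC : y ∈ Cs
      · exact ih (Or.inl hyC)
      · have hyXs : y ∈ Xs := nbhd_reach_subset
          (hXs.1.mono_right Set.subset_union_left) ⟨hyC, x, hxC, h.1⟩
        have hyv : y = v := by
          have := h.2.2
          simp only [Set.mem_diff, Set.mem_singleton_iff, not_and, not_not] at this
          exact this hyXs
        subst hyv
        refine ih (Or.inr ⟨?_, SimpleGraph.Reachable.refl _⟩)
        simp only [Set.mem_union, not_or]
        exact ⟨fun hc => hdCX _ hc hv, by simp⟩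
    · by_cases hyC : y ∈ Cs
      · exact ih (Or.inl hyC)
      · have hyM : y ∉ Cs ∪ (Xs \ {v}) := by
          simp only [Set.mem_union, not_or]
          exact ⟨hyC, h.2.2⟩
        have hadj : (removeVerts G (Cs ∪ (Xs \ {v}))).Adj x y := ⟨h.1, hxM, hyM⟩
        exact ih (Or.inr ⟨hyM, hreach.trans hadj.reachable⟩)

include hST hXs hmin hfar in
/-- Lemma C: pushing past a vertex of the farthest minimum separator raises the cut size. -/
lemma lam_succ {v : V} (hv : v ∈ Xs) (Y : Set V)
    (hY : IsSeparator G (S ∪ {v}) T Y) : Xs.ncard + 1 ≤ Y.ncard := by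
  have hYS : IsSeparator G S T Y :=
    ⟨hY.1.mono_right (Set.union_subset_union_left T Set.subset_union_left),
     fun s hs t ht => hY.2 s (Or.inl hs) t ht⟩
  by_contra hle
  have hYcard : Y.ncard = Xs.ncard := le_antisymm (by omega) (hmin Y hYS)
  have hYmin : IsMinimalSep G S T Y := minimum_is_minimal hYS
    (fun Z hZ => hYcard ▸ hmin Z hZ)
  have hD : reachSet G Y S ⊆ reachSet G Xs S := min_reach_subset hXs hmin hfar hYS hYcard
  have hYsub : Y ⊆ reachSet G Xs S ∪ (Xs \ {v}) := by
    intro y hy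
    have hynb : y ∈ nbhd G (reachSet G Y S) := (minimal_eq_nbhd hYmin) ▸ hy
    obtain ⟨hyD, u, huD, hadj⟩ := hynb
    have hvY : v ∉ Y := fun hc => hY.1.ne_of_mem hc (Or.inl (Or.inr rfl)) rfl
    by_cases hyC : y ∈ reachSet G Xs S
    · exact Or.inl hyC
    · have : y ∈ Xs := nbhd_reach_subset (hXs.1.mono_right Set.subset_union_left)
        ⟨hyC, u, hD huD, hadj⟩
      refine Or.inr ⟨this, ?_⟩
      simp only [Set.mem_singleton_iff]
      rintro rfl
      exact hvY hy
  have hXsmin : IsMinimalSep G S T Xs := minimum_is_minimal hXs hmin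
  have hnosep : ¬ IsSeparator G S T (Xs \ {v}) :=
    hXsmin.2 _ (Set.sdiff_singleton_ssubset.mpr hv)
  have hdisj : Disjoint (Xs \ {v}) (S ∪ T) := hXs.1.mono_left Set.diff_subset
  have : ∃ s ∈ S, ∃ t ∈ T, (removeVerts G (Xs \ {v})).Reachable s t := by
    by_contra hc
    push_neg at hc
    exact hnosep ⟨hdisj, fun s hs t ht => hc s hs t ht⟩
  obtain ⟨s, hs, t, ht, hr⟩ := this
  obtain ⟨w⟩ := hr
  have := walk_analysis hXs hv w (Or.inl (subset_reachSet G Xs S hs))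
  rcases this with htC | hrvt
  · exact absurd (Set.mem_inter htC ht) (by simp [sep_T_disjoint hXs])
  · have : (removeVerts G Y).Reachable v t :=
      hrvt.mono (removeVerts_mono G hYsub)
    exact hY.2 v (Or.inr rfl) t ht this

end Farthest

section Branch

lemma removeVerts_removeVerts (G : SimpleGraph V) (A B : Set V) :
    removeVerts (removeVerts G A) B = removeVerts G (A ∪ B) := by
  ext u v
  show (G.Adj u v ∧ u ∉ A ∧ v ∉ A) ∧ u ∉ B ∧ v ∉ B ↔
    G.Adj u v ∧ u ∉ A ∪ B ∧ v ∉ A ∪ B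
  simp only [Set.mem_union, not_or]
  tauto

lemma reachSet_removeVerts (G : SimpleGraph V) (A B S : Set V) :
    reachSet (removeVerts G A) B S = reachSet G (A ∪ B) S := by
  unfold reachSet
  rw [removeVerts_removeVerts]

lemma sep_removeVerts_iff {v : V} (hvST : v ∉ S ∪ T) (Y : Set V) (hvY : v ∉ Y) :
    IsSeparator (removeVerts G {v}) S T Y ↔ IsSeparator G S T (Y ∪ {v}) := by
  unfold IsSeparator
  rw [removeVerts_removeVerts, Set.union_comm {v} Y]
  constructor
  · rintro ⟨hd, hr⟩
    refine ⟨?_, hr⟩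
    rw [Set.disjoint_union_left]
    exact ⟨hd, by simpa using hvST⟩
  · rintro ⟨hd, hr⟩
    exact ⟨hd.mono_left Set.subset_union_left, hr⟩

/-- Branch A: removing a vertex of an important separator. -/
lemma branchA {v : V} (hX : IsImportantSep G S T X) (hv : v ∈ X) :
    IsImportantSep (removeVerts G {v}) S T (X \ {v}) := by
  have hvST : v ∉ S ∪ T := fun hc => hX.1.1.1.ne_of_mem hv hc rfl
  have hXv : (X \ {v}) ∪ {v} = X := by
    rw [Set.diff_union_self]
    exact Set.union_eq_self_of_subset_right (by simpa using hv)
  have hsep : IsSeparator (removeVerts G {v}) S T (X \ {v}) := by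
    rw [sep_removeVerts_iff hvST _ (by simp), hXv]
    exact hX.1.1
  refine ⟨⟨hsep, fun X'' hX'' hsep'' => ?_⟩, fun X' hX' hlt => ?_⟩
  · -- minimality
    have hvX'' : v ∉ X'' := fun hc => (hX''.subset hc).2 rfl
    rw [sep_removeVerts_iff hvST _ hvX''] at hsep''
    refine hX.1.2 (X'' ∪ {v}) ?_ hsep''
    obtain ⟨w, hw1, hw2⟩ := Set.exists_of_ssubset hX''
    refine ⟨?_, fun hback => ?_⟩
    · refine Set.union_subset (hX''.subset.trans (Set.diff_subset.trans subset_rfl)) ?_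
      simpa using hv
    · have hwX : w ∈ X := hw1.1
      have := hback hwX
      rcases this with h | h
      · exact hw2 h
      · exact hw1.2 h
  · -- importance
    have hvX' : v ∉ X' := by
      intro hc
      refine hX'.2 (X' \ {v}) (Set.sdiff_singleton_ssubset.mpr hc) ?_
      have h1 : IsSeparator (removeVerts G {v}) S T X' := hX'.1
      unfold IsSeparator at h1 ⊢
      rw [removeVerts_removeVerts] at h1 ⊢
      have : {v} ∪ X' \ {v} = {v} ∪ X' := by
        rw [Set.union_diff_self]  -- placeholder2
      rw [this]
      exact ⟨h1.1.mono_left Set.diff_subset, h1.2⟩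
    have hsepW : IsSeparator G S T (X' ∪ {v}) := (sep_removeVerts_iff hvST _ hvX').mp hX'.1
    obtain ⟨Z, hZW, hZmin⟩ := exists_minimal_subset hsepW
    have hreq : ∀ A : Set V, reachSet (removeVerts G {v}) A S = reachSet G (A ∪ {v}) S := by
      intro A
      rw [reachSet_removeVerts, Set.union_comm]
    have hrX : reachSet (removeVerts G {v}) (X \ {v}) S = reachSet G X S := by
      rw [hreq, hXv]
    have hrX' : reachSet (removeVerts G {v}) X' S = reachSet G (X' ∪ {v}) S := hreq X'
    rw [hrX, hrX'] at hlt
    have hZr : reachSet G (X' ∪ {v}) S ⊆ reachSet G Z S := reachSet_mono G S hZW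
    have hstrict : reachSet G X S ⊂ reachSet G Z S := by
      refine ⟨hlt.subset.trans hZr, fun hback => ?_⟩
      obtain ⟨w, hw1, hw2⟩ := Set.exists_of_ssubset hlt
      exact hw2 (hback (hZr hw1))
    have himp := hX.2 Z hZmin hstrict
    have hZle : Z.ncard ≤ (X' ∪ {v}).ncard := Set.ncard_le_ncard hZW (Set.toFinite _)
    have hXcard : (X \ {v}).ncard + 1 = X.ncard := Set.ncard_diff_singleton_add_one hv (Set.toFinite X)
    have hX'card : (X' ∪ {v}).ncard ≤ X'.ncard + 1 := by
      refine (Set.ncard_union_le _ _).trans ?_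
      simp
    omega


variable {Xs : Set V}

/-- Branch B: an important separator avoiding a vertex of the farthest min separator
is an important separator for the enlarged source. -/
lemma branchB (hXs : IsSeparator G S T Xs)
    (hmin : ∀ Y, IsSeparator G S T Y → Xs.ncard ≤ Y.ncard)
    (hfar : ∀ Y, IsSeparator G S T Y → Y.ncard = Xs.ncard →
      (reachSet G Y S).ncard ≤ (reachSet G Xs S).ncard)
    {v : V} (hv : v ∈ Xs) (hX : IsImportantSep G S T X) (hvX : v ∉ X) :
    IsImportantSep G (S ∪ {v}) T X := by
  set C := reachSet G X S with hC
  have hCsC : reachSet G Xs S ⊆ C := important_reach_supset hXs hmin hfar hX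
  have hXsmin : IsMinimalSep G S T Xs := minimum_is_minimal hXs hmin
  have hvC : v ∈ C := by
    have hveq : v ∈ nbhd G (reachSet G Xs S) := (minimal_eq_nbhd hXsmin) ▸ hv
    obtain ⟨hvCs, u, huCs, hadj⟩ := hveq
    obtain ⟨s, hs, hr⟩ := hCsC huCs
    have huX : u ∉ X := not_mem_of_reach (hX.1.1.1.mono_right Set.subset_union_left) (hCsC huCs)
    exact ⟨s, hs, hr.trans (SimpleGraph.Adj.reachable
      (⟨hadj, huX, hvX⟩ : (removeVerts G X).Adj u v))⟩
  have hreach_eq : reachSet G X (S ∪ {v}) = C := by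
    apply Set.Subset.antisymm
    · rintro w ⟨s, hs, hr⟩
      rcases hs with hs | hs
      · exact ⟨s, hs, hr⟩
      · simp only [Set.mem_singleton_iff] at hs
        subst hs
        obtain ⟨s', hs', hr'⟩ := hvC
        exact ⟨s', hs', hr'.trans hr⟩
    · rintro w ⟨s, hs, hr⟩
      exact ⟨s, Or.inl hs, hr⟩
  have hsep : IsSeparator G (S ∪ {v}) T X := by
    refine ⟨?_, fun s hs t ht hr => ?_⟩
    · rw [Set.union_assoc, Set.union_comm {v} T, ← Set.union_assoc] at *
      rw [Set.disjoint_union_right]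
      exact ⟨hX.1.1.1, by simpa using hvX⟩
    · have : t ∈ reachSet G X (S ∪ {v}) := ⟨s, hs, hr⟩
      rw [hreach_eq] at this
      exact absurd (Set.mem_inter this ht) (by rw [hC, sep_T_disjoint hX.1.1]; simp)
  refine ⟨⟨hsep, fun X' hX' hsep' => ?_⟩, fun X' hX' hlt => ?_⟩
  · refine hX.1.2 X' hX' ?_
    exact ⟨hsep'.1.mono_right (Set.union_subset_union_left T Set.subset_union_left),
      fun s hs t ht => hsep'.2 s (Or.inl hs) t ht⟩
  · -- importance
    set D' := reachSet G X' (S ∪ {v}) with hD'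
    rw [hreach_eq] at hlt
    have hX'eq : X' = nbhd G D' := minimal_eq_nbhd hX'
    have hCsub : C ⊆ reachSet G X' S := by
      intro u hu
      obtain ⟨s, hs, hr⟩ := hu
      obtain ⟨w⟩ := hr
      have hsupp : ∀ x ∈ w.support, x ∈ D' :=
        fun x hx => hlt.subset (walk_support_reach w ⟨s, hs, SimpleGraph.Reachable.refl s⟩ x hx)
      exact ⟨s, hs, hX'eq ▸ reachable_transfer w hsupp⟩
    have hX'S : IsSeparator G S T X' :=
      ⟨hX'.1.1.mono_right (Set.union_subset_union_left T Set.subset_union_left),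
       fun s hs t ht => hX'.1.2 s (Or.inl hs) t ht⟩
    obtain ⟨Z, hZX', hZmin⟩ := exists_minimal_subset hX'S
    have hZr : reachSet G X' S ⊆ reachSet G Z S := reachSet_mono G S hZX'
    obtain ⟨w0, hw0D, hw0C⟩ := Set.exists_of_ssubset hlt
    have hw0 : w0 ∈ reachSet G X' S := by
      obtain ⟨s, hs, hr⟩ := hw0D
      rcases hs with hs | hs
      · exact ⟨s, hs, hr⟩
      · simp only [Set.mem_singleton_iff] at hs
        subst hs
        obtain ⟨s', hs', hr'⟩ := hCsub hvC
        exact ⟨s', hs', hr'.trans hr⟩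
    have hstrict : reachSet G X S ⊂ reachSet G Z S := by
      refine ⟨(hC ▸ hCsub).trans hZr, fun hback => ?_⟩
      exact hw0C (hback (hZr hw0))
    have himp := hX.2 Z hZmin hstrict
    have hZle : Z.ncard ≤ X'.ncard := Set.ncard_le_ncard hZX' (Set.toFinite _)
    omega

end Branch

lemma main_bound : ∀ μ : ℕ, ∀ (G : SimpleGraph V) (S T : Set V), Disjoint S T →
    ∀ k : ℕ, (∀ X, IsSeparator G S T X → 2 * k ≤ μ + X.ncard) →
    {X : Set V | IsImportantSep G S T X ∧ X.ncard ≤ k}.ncard ≤ 2 ^ μ := by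
  intro μ
  induction μ using Nat.strong_induction_on with
  | _ μ ih =>
  intro G S T hST k hk
  set 𝒜 := {X : Set V | IsImportantSep G S T X ∧ X.ncard ≤ k} with h𝒜
  by_cases hne : 𝒜.Nonempty
  swap
  · rw [Set.not_nonempty_iff_eq_empty] at hne
    simp [hne]
  obtain ⟨X₀, hX₀⟩ := hne
  by_cases hempty : IsSeparator G S T ∅
  · -- the empty set separates: only minimal separator is ∅
    have hsub : 𝒜 ⊆ {∅} := by
      rintro X ⟨hX, -⟩
      simp only [Set.mem_singleton_iff]
      by_contra hXne
      exact hX.1.2 ∅ (Set.empty_ssubset.mpr (Set.nonempty_iff_ne_empty.mpr hXne)) hempty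
    calc 𝒜.ncard ≤ ({∅} : Set (Set V)).ncard := Set.ncard_le_ncard hsub (Set.toFinite _)
      _ = 1 := Set.ncard_singleton _
      _ ≤ 2 ^ μ := Nat.one_le_two_pow
  -- pick the farthest minimum separator
  have hsepX₀ : IsSeparator G S T X₀ := hX₀.1.1.1
  have hSne : {Y : Set V | IsSeparator G S T Y}.Nonempty := ⟨X₀, hsepX₀⟩
  obtain ⟨M, hM, hMmin⟩ := Set.exists_min_image _ Set.ncard (Set.toFinite _) hSne
  obtain ⟨Xs, hXs', hXsmax⟩ := Set.exists_max_image
    {Y : Set V | IsSeparator G S T Y ∧ Y.ncard = M.ncard}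
    (fun Y => (reachSet G Y S).ncard) (Set.toFinite _) ⟨M, hM, rfl⟩
  obtain ⟨hXs, hXscard⟩ := hXs'
  have hmin : ∀ Y, IsSeparator G S T Y → Xs.ncard ≤ Y.ncard :=
    fun Y hY => hXscard ▸ hMmin Y hY
  have hfar : ∀ Y, IsSeparator G S T Y → Y.ncard = Xs.ncard →
      (reachSet G Y S).ncard ≤ (reachSet G Xs S).ncard :=
    fun Y hY hYc => hXsmax Y ⟨hY, hXscard ▸ hYc⟩
  have hXsne : Xs.Nonempty := by
    rcases Set.eq_empty_or_nonempty Xs with h | h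
    · exact absurd (h ▸ hXs) hempty
    · exact h
  obtain ⟨v, hv⟩ := hXsne
  have hvST : v ∉ S ∪ T := fun hc => hXs.1.ne_of_mem hv hc rfl
  have hk1 : 1 ≤ k := by
    have h1 : 1 ≤ X₀.ncard := by
      rcases Set.eq_empty_or_nonempty X₀ with h | h
      · exact absurd (h ▸ hsepX₀) hempty
      · have := Set.ncard_pos (Set.toFinite X₀) |>.mpr h
        omega
    exact le_trans h1 hX₀.2
  have hμ1 : 1 ≤ μ := by
    have := hk X₀ hsepX₀
    have := hX₀.2
    omega
  -- split according to membership of v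
  set 𝒜A := {X ∈ 𝒜 | v ∈ X} with h𝒜A
  set 𝒜B := {X ∈ 𝒜 | v ∉ X} with h𝒜B
  have hsplit : 𝒜 = 𝒜A ∪ 𝒜B := by
    ext X
    simp only [h𝒜A, h𝒜B, Set.mem_union, Set.mem_setOf_eq, Set.mem_sep_iff]
    tauto
  -- branch A
  have hA : 𝒜A.ncard ≤ 2 ^ (μ - 1) := by
    have himg : (fun X => X \ {v}) '' 𝒜A ⊆
        {X : Set V | IsImportantSep (removeVerts G {v}) S T X ∧ X.ncard ≤ k - 1} := by
      rintro _ ⟨X, ⟨⟨hXimp, hXk⟩, hvX⟩, rfl⟩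
      refine ⟨branchA hXimp hvX, ?_⟩
      show (X \ {v}).ncard ≤ k - 1
      have := Set.ncard_diff_singleton_add_one hvX (Set.toFinite X)
      omega
    have hinj : Set.InjOn (fun X => X \ {v}) 𝒜A := by
      rintro X ⟨-, hvX⟩ Y ⟨-, hvY⟩ hXY
      have hXY' : X \ {v} = Y \ {v} := hXY
      have : X \ {v} ∪ {v} = Y \ {v} ∪ {v} := by rw [hXY']
      rwa [Set.diff_union_self, Set.diff_union_self,
        Set.union_eq_self_of_subset_right (by simpa using hvX),
        Set.union_eq_self_of_subset_right (by simpa using hvY)] at this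
    have hIH := ih (μ - 1) (by omega) (removeVerts G {v}) S T hST (k - 1) ?hyp
    case hyp =>
      intro Y hY
      by_cases hvY : v ∈ Y
      · have hY' : IsSeparator (removeVerts G {v}) S T (Y \ {v}) := by
          unfold IsSeparator at hY ⊢
          rw [removeVerts_removeVerts] at hY ⊢
          rw [Set.union_diff_self]
          exact ⟨hY.1.mono_left Set.diff_subset, hY.2⟩
        rw [sep_removeVerts_iff hvST _ (by simp)] at hY'
        rw [Set.diff_union_self, Set.union_eq_self_of_subset_right (by simpa using hvY)] at hY'
        have := hk Y hY'
        omega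
      · rw [sep_removeVerts_iff hvST _ hvY] at hY
        have := hk _ hY
        have h1 : (Y ∪ {v}).ncard ≤ Y.ncard + 1 := by
          refine (Set.ncard_union_le _ _).trans ?_
          simp
        omega
    calc 𝒜A.ncard = ((fun X => X \ {v}) '' 𝒜A).ncard := (Set.ncard_image_of_injOn hinj).symm
      _ ≤ _ := Set.ncard_le_ncard himg (Set.toFinite _)
      _ ≤ 2 ^ (μ - 1) := hIH
  -- branch B
  have hB : 𝒜B.ncard ≤ 2 ^ (μ - 1) := by
    have hvT : v ∉ T := fun hc => hvST (Or.inr hc)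
    have hST' : Disjoint (S ∪ {v}) T :=
      Set.disjoint_union_left.mpr ⟨hST, Set.disjoint_singleton_left.mpr hvT⟩
    have hsub : 𝒜B ⊆ {X : Set V | IsImportantSep G (S ∪ {v}) T X ∧ X.ncard ≤ k} := by
      rintro X ⟨⟨hXimp, hXk⟩, hvX⟩
      exact ⟨branchB hXs hmin hfar hv hXimp hvX, hXk⟩
    have hIH := ih (μ - 1) (by omega) G (S ∪ {v}) T hST' k ?hyp2
    case hyp2 =>
      intro Y hY
      have h1 := lam_succ hST hXs hmin hfar hv Y hY
      have h2 := hk Xs hXs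
      omega
    calc 𝒜B.ncard ≤ _ := Set.ncard_le_ncard hsub (Set.toFinite _)
      _ ≤ 2 ^ (μ - 1) := hIH
  calc 𝒜.ncard ≤ 𝒜A.ncard + 𝒜B.ncard := hsplit ▸ Set.ncard_union_le _ _
    _ ≤ 2 ^ (μ - 1) + 2 ^ (μ - 1) := Nat.add_le_add hA hB
    _ = 2 ^ (μ - 1 + 1) := by rw [pow_succ]; omega
    _ = 2 ^ μ := by congr 1; omega

end ImpSep

/-- There are at most `4 ^ k` important `S`–`T` separators of size at most `k`. -/
theorem important_separators_bound
    (G : SimpleGraph V) (S T : Set V) (hST : Disjoint S T) (k : ℕ) :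
    {X : Set V | IsImportantSep G S T X ∧ X.ncard ≤ k}.ncard ≤ 4 ^ k := by
  have := ImpSep.main_bound (2 * k) G S T hST k (fun X _ => by omega)
  calc {X : Set V | IsImportantSep G S T X ∧ X.ncard ≤ k}.ncard
      ≤ 2 ^ (2 * k) := this
    _ = 4 ^ k := by rw [pow_mul]; norm_num
end

section
/- Let G = (V,E) be a finite simple undirected graph and W ⊆ V a vertex set such that no two distinct vertices of W are adjacent in G. Then 2·OPT_lp(G,W) ≤ ∑_{w ∈ W} mincut(G, w, W ∖ {w}). -/
open scoped Classical

variable {V : Type*} [Fintype V] [DecidableEq V]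

open scoped ENNReal

/-- A simple path of `G` connecting two distinct vertices of `W`. -/
structure WPath {V : Type*} (G : SimpleGraph V) (W : Set V) where
  a : V
  b : V
  ha : a ∈ W
  hb : b ∈ W
  hne : a ≠ b
  walk : G.Walk a b
  ispath : walk.IsPath

/-- The objective value `∑_{v ∈ V ∖ W} d_v` of the multiway-cut LP. -/
noncomputable def LPObj (W : Set V) (d : V → ℝ≥0∞) : ℝ≥0∞ :=
  ∑ v ∈ Finset.univ.filter (fun v => v ∉ W), d v

/-- Feasibility for the multiway-cut LP: `∑_{v ∈ V(P) ∖ W} d_v ≥ 1` for every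
simple path `P` connecting two distinct vertices of `W`. -/
def LPFeasible (G : SimpleGraph V) (W : Set V) (d : V → ℝ≥0∞) : Prop :=
  ∀ P : WPath G W,
    1 ≤ ∑ v ∈ Finset.univ.filter (fun v => v ∈ P.walk.support ∧ v ∉ W), d v

/-- The optimal value of the multiway-cut LP (`⊤` if the LP is infeasible). -/
noncomputable def OPTlp (G : SimpleGraph V) (W : Set V) : ℝ≥0∞ :=
  ⨅ (d : V → ℝ≥0∞) (_ : LPFeasible G W d), LPObj W d

/-- An optimal solution of the multiway-cut LP. -/
def IsOptimalLP (G : SimpleGraph V) (W : Set V) (d : V → ℝ≥0∞) : Prop :=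
  LPFeasible G W d ∧ LPObj W d = OPTlp G W

/-- A non-zero vertex: a vertex `v ∈ V ∖ W` such that every optimal LP solution
assigns it a positive value. -/
def NonZeroVertex (G : SimpleGraph V) (W : Set V) (v : V) : Prop :=
  v ∉ W ∧ ∀ d, IsOptimalLP G W d → d v ≠ 0

/-- A `{w}`–`(W ∖ {w})` separator: `X ⊆ V ∖ W` whose removal disconnects `w` from
every other vertex of `W`. -/
def IsIsolSep (G : SimpleGraph V) (W : Set V) (w : V) (X : Set V) : Prop :=
  Disjoint X W ∧ ∀ w' ∈ W, w' ≠ w → ¬ (removeVerts G X).Reachable w w'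

/-- `mincut(G, w, W ∖ {w})`: the minimum size of a `{w}`–`(W ∖ {w})` separator. -/
noncomputable def mincutIso (G : SimpleGraph V) (W : Set V) (w : V) : ℕ :=
  sInf {n | ∃ X, IsIsolSep G W w X ∧ X.ncard = n}

set_option linter.unusedSectionVars false in
lemma walk_avoid_aux (G : SimpleGraph V) (X : Set V) {a b : V} (p : G.Walk a b)
    (h : ∀ v ∈ p.support, v ∉ X) : (removeVerts G X).Reachable a b := by
  induction p with
  | nil => exact SimpleGraph.Reachable.refl _
  | cons hadj q ih =>
      rename_i u v c
      have hu : u ∉ X := h u (by simp)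
      have hv : v ∉ X := h v (by simp [SimpleGraph.Walk.support_cons])
      exact (SimpleGraph.Adj.reachable (⟨hadj, hu, hv⟩ : (removeVerts G X).Adj u v)).trans
        (ih fun x hx => h x (by simp [SimpleGraph.Walk.support_cons, hx]))

set_option linter.unusedSectionVars false in
lemma exists_min_sep_aux (G : SimpleGraph V) (W : Set V)
    (hInd : ∀ w₁ ∈ W, ∀ w₂ ∈ W, w₁ ≠ w₂ → ¬ G.Adj w₁ w₂) (w : V) (hw : w ∈ W) :
    ∃ X : Set V, IsIsolSep G W w X ∧ X.ncard = mincutIso G W w := by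
  have hne : {n | ∃ X, IsIsolSep G W w X ∧ X.ncard = n}.Nonempty := by
    refine ⟨(Wᶜ : Set V).ncard, Wᶜ, ⟨disjoint_compl_left, ?_⟩, rfl⟩
    intro w' hw' hne hr
    obtain ⟨p⟩ := hr
    cases p with
    | nil => exact hne rfl
    | cons hadj q =>
        rename_i v
        obtain ⟨hadj', hu, hv⟩ := hadj
        simp only [Set.notMem_compl_iff] at hu hv
        exact hInd w hw v hv (G.ne_of_adj hadj') hadj'
  obtain ⟨X, hX, hcard⟩ := Nat.sInf_mem hne
  exact ⟨X, hX, hcard⟩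

/-- If no two distinct vertices of `W` are adjacent, then
`2 · OPT_lp(G,W) ≤ ∑_{w ∈ W} mincut(G, w, W ∖ {w})`. -/
theorem two_optlp_le_sum_mincut
    (G : SimpleGraph V) (W : Set V)
    (hInd : ∀ w₁ ∈ W, ∀ w₂ ∈ W, w₁ ≠ w₂ → ¬ G.Adj w₁ w₂) :
    2 * OPTlp G W ≤
      ∑ w ∈ Finset.univ.filter (fun w => w ∈ W), (mincutIso G W w : ℝ≥0∞) := by
  have hsep := exists_min_sep_aux G W hInd
  choose! X hX hXcard using hsep
  set Wf := Finset.univ.filter (fun w => w ∈ W) with hWf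
  have hWfmem : ∀ w, w ∈ Wf ↔ w ∈ W := by intro w; simp [hWf]
  set d : V → ℝ≥0∞ := fun v => ∑ w ∈ Wf, (if v ∈ X w then (2:ℝ≥0∞)⁻¹ else 0) with hd
  -- every W-path meets the separators of both its endpoints
  have hhit : ∀ (P : WPath G W) (w : V), w ∈ W → (w = P.a ∨ w = P.b) →
      ∃ v ∈ P.walk.support, v ∈ X w := by
    intro P w hw hab
    by_contra hcon
    push_neg at hcon
    have hr := walk_avoid_aux G (X w) P.walk hcon
    rcases hab with h | h
    · subst h; exact (hX _ hw).2 P.b P.hb (Ne.symm P.hne) hr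
    · subst h; exact (hX _ hw).2 P.a P.ha P.hne hr.symm
  have hfeas : LPFeasible G W d := by
    intro P
    set S := Finset.univ.filter (fun v => v ∈ P.walk.support ∧ v ∉ W) with hS
    have key : ∀ w, w ∈ W → (w = P.a ∨ w = P.b) →
        (2:ℝ≥0∞)⁻¹ ≤ ∑ v ∈ S, (if v ∈ X w then (2:ℝ≥0∞)⁻¹ else 0) := by
      intro w hw hab
      obtain ⟨v, hvs, hvX⟩ := hhit P w hw hab
      have hvW : v ∉ W := Set.disjoint_left.mp (hX w hw).1 hvX
      have hvS : v ∈ S := by simp [hS, hvs, hvW]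
      calc (2:ℝ≥0∞)⁻¹ = (if v ∈ X w then (2:ℝ≥0∞)⁻¹ else 0) := by simp [hvX]
        _ ≤ _ := Finset.single_le_sum (f := fun v => if v ∈ X w then (2:ℝ≥0∞)⁻¹ else 0) (fun _ _ => zero_le) hvS
    have hswap : ∑ v ∈ S, d v
        = ∑ w ∈ Wf, ∑ v ∈ S, (if v ∈ X w then (2:ℝ≥0∞)⁻¹ else 0) := by
      simp only [hd]; exact Finset.sum_comm
    have hsub : ({P.a, P.b} : Finset V) ⊆ Wf := by
      intro x hx
      rcases Finset.mem_insert.mp hx with h | h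
      · subst h; exact (hWfmem _).mpr P.ha
      · rw [Finset.mem_singleton] at h; subst h; exact (hWfmem _).mpr P.hb
    calc (1:ℝ≥0∞) = 2⁻¹ + 2⁻¹ := by rw [ENNReal.inv_two_add_inv_two]
      _ ≤ (∑ v ∈ S, (if v ∈ X P.a then (2:ℝ≥0∞)⁻¹ else 0))
          + ∑ v ∈ S, (if v ∈ X P.b then (2:ℝ≥0∞)⁻¹ else 0) :=
            add_le_add (key P.a P.ha (Or.inl rfl)) (key P.b P.hb (Or.inr rfl))
      _ = ∑ w ∈ ({P.a, P.b} : Finset V), ∑ v ∈ S, (if v ∈ X w then (2:ℝ≥0∞)⁻¹ else 0) :=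
            (Finset.sum_pair (f := fun w => ∑ v ∈ S, (if v ∈ X w then (2:ℝ≥0∞)⁻¹ else 0)) P.hne).symm
      _ ≤ ∑ w ∈ Wf, ∑ v ∈ S, (if v ∈ X w then (2:ℝ≥0∞)⁻¹ else 0) :=
            Finset.sum_le_sum_of_subset hsub
      _ = ∑ v ∈ S, d v := hswap.symm
  -- objective value
  have hobj : 2 * LPObj W d = ∑ w ∈ Wf, (mincutIso G W w : ℝ≥0∞) := by
    have h1 : LPObj W d = ∑ w ∈ Wf, (2:ℝ≥0∞)⁻¹ * (mincutIso G W w : ℝ≥0∞) := by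
      unfold LPObj
      rw [show (∑ v ∈ Finset.univ.filter (fun v => v ∉ W), d v)
          = ∑ w ∈ Wf, ∑ v ∈ Finset.univ.filter (fun v => v ∉ W),
              (if v ∈ X w then (2:ℝ≥0∞)⁻¹ else 0) from by
        simp only [hd]; exact Finset.sum_comm]
      refine Finset.sum_congr rfl fun w hw => ?_
      have hwW : w ∈ W := (hWfmem w).mp hw
      have hfil : (Finset.univ.filter (fun v => v ∉ W)).filter (fun v => v ∈ X w)
          = (X w).toFinset := by
        ext v
        simp only [Finset.mem_filter, Finset.mem_univ, true_and, Set.mem_toFinset]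
        exact ⟨fun h => h.2, fun h => ⟨Set.disjoint_left.mp (hX w hwW).1 h, h⟩⟩
      rw [← Finset.sum_filter, hfil, Finset.sum_const, ← hXcard w hwW,
        Set.ncard_eq_toFinset_card']
      simp [mul_comm]
    rw [h1, Finset.mul_sum]
    refine Finset.sum_congr rfl fun w _ => ?_
    rw [← mul_assoc, ENNReal.mul_inv_cancel (by norm_num) (by norm_num), one_mul]
  have h1 : OPTlp G W ≤ LPObj W d := by
    unfold OPTlp
    exact iInf₂_le d hfeas
  calc 2 * OPTlp G W ≤ 2 * LPObj W d := mul_le_mul_right h1 2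
    _ = ∑ w ∈ Wf, (mincutIso G W w : ℝ≥0∞) := hobj
end

section
/- Let G = (V,E) be a finite simple undirected graph and W ⊆ V a vertex set such that no two distinct vertices of W are adjacent in G (so that the sets FC_W(G,w) are well-defined), and assume P_W(G,∅) = ∅. Then for every subset R ⊆ W with |R| ≥ 3, it holds that P_W(G,R) = ∅. -/
open scoped Classical

variable {V : Type*} [Fintype V] [DecidableEq V]

/-- The region `P_W(G, R) = ⋂_{w ∈ R} FC(w) ∖ ⋃_{w' ∈ W ∖ R} FC(w')`
(for `R = ∅` the intersection is the whole vertex set). -/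
def regionP (W : Set V) (FC : V → Set V) (R : Set V) : Set V :=
  (⋂ w ∈ R, FC w) \ (⋃ w ∈ (W \ R), FC w)

/-! ### Auxiliary material for the proof -/

private lemma mem_reachSet_singleton {G : SimpleGraph V} {X : Set V} {w v : V} :
    v ∈ reachSet G X {w} ↔ (removeVerts G X).Reachable w v := by
  simp [reachSet]

/-- Walk induction for `G − X`. -/
private lemma removeVerts_walk_prop {G : SimpleGraph V} {X : Set V} {P : V → Prop}
    (hstep : ∀ p q, G.Adj p q → p ∉ X → q ∉ X → P p → P q) :
    ∀ {a b : V}, (removeVerts G X).Walk a b → P a → P b := by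
  intro a b p
  induction p with
  | nil => exact id
  | cons h _ ih => exact fun ha => ih (hstep _ _ h.1 h.2.1 h.2.2 ha)

/-- Along a walk from outside `P` into `P` there is a crossing edge. -/
private lemma walk_cross {H : SimpleGraph V} {P : Set V} :
    ∀ {a b : V}, H.Walk a b → a ∉ P → b ∈ P →
      ∃ u z, H.Adj u z ∧ H.Reachable a u ∧ u ∉ P ∧ z ∈ P := by
  intro a b p
  induction p with
  | nil => exact fun ha hb => absurd hb ha
  | @cons a c b h q ih =>
      intro ha hb
      by_cases hc : c ∈ P
      · exact ⟨a, c, h, SimpleGraph.Reachable.refl a, ha, hc⟩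
      · obtain ⟨u, z, hadj, hr, hu, hz⟩ := ih hc hb
        exact ⟨u, z, hadj, h.reachable.trans hr, hu, hz⟩

/-- A criterion for being a `{w}`–`(W∖{w})` separator: there is a set `A` containing all
terminals except `w`, not containing `w`, such that any edge entering `A` from outside has
an endpoint in `X`. -/
private lemma isSep_of_blocked (G : SimpleGraph V) (W : Set V) (w : V)
    (A X : Set V)
    (hXW : Disjoint X ({w} ∪ (W \ {w})))
    (hstep : ∀ p z, p ∉ A → p ∉ X → z ∉ X → G.Adj p z → z ∉ A)
    (hwA : w ∉ A) (htA : ∀ t ∈ W, t ≠ w → t ∈ A) :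
    IsSeparator G {w} (W \ {w}) X := by
  refine ⟨hXW, ?_⟩
  intro s hs t ht hr
  rw [Set.mem_singleton_iff] at hs
  subst hs
  obtain ⟨htW, htw⟩ := ht
  rw [Set.mem_singleton_iff] at htw
  obtain ⟨p⟩ := hr
  have hnot : t ∉ A :=
    removeVerts_walk_prop (P := fun x => x ∉ A)
      (fun p q hpq hpX hqX hp hq => hstep p q hp hpX hqX hpq hq) p hwA
  exact hnot (htA t htW htw)

private lemma ncard_split (s t : Set V) : (s \ t).ncard + (s ∩ t).ncard = s.ncard := by
  rw [← Set.ncard_union_eq (Set.disjoint_left.mpr fun x hx h2 => hx.2 h2.2)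
      (Set.toFinite _) (Set.toFinite _), Set.diff_union_inter]

/-- If `P_W(G,∅) = ∅`, then `P_W(G,R) = ∅` for every `R ⊆ W` with
`|R| ≥ 3`. Here `FC w` is the set of vertices connected to `w` after removing the farthest
minimum `{w}`–`(W ∖ {w})` separator. -/
theorem region_empty_of_three
    (G : SimpleGraph V) (W : Set V)
    (hInd : ∀ w₁ ∈ W, ∀ w₂ ∈ W, w₁ ≠ w₂ → ¬ G.Adj w₁ w₂)
    (sep : V → Set V)
    (hsep : ∀ w ∈ W, IsMinimumSep G {w} (W \ {w}) (sep w) ∧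
      IsFarthest G {w} (W \ {w}) (sep w))
    (FC : V → Set V) (hFC : ∀ w ∈ W, FC w = reachSet G (sep w) {w})
    (hempty : regionP W FC ∅ = ∅) :
    ∀ R : Set V, R ⊆ W → 3 ≤ R.ncard → regionP W FC R = ∅ := by
  -- the reach sets
  set C : V → Set V := fun w => reachSet G (sep w) {w} with hCdef
  have hmemC : ∀ w v, v ∈ C w ↔ (removeVerts G (sep w)).Reachable w v := by
    intro w v; rw [hCdef]; exact mem_reachSet_singleton
  -- basic facts about the separators
  have hsepsep : ∀ w ∈ W, IsSeparator G {w} (W \ {w}) (sep w) :=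
    fun w hw => (hsep w hw).1.1
  have hmin : ∀ w ∈ W, ∀ X, IsSeparator G {w} (W \ {w}) X → (sep w).ncard ≤ X.ncard :=
    fun w hw => (hsep w hw).1.2
  have hWeq : ∀ w ∈ W, ({w} : Set V) ∪ (W \ {w}) = W :=
    fun w hw => Set.union_diff_cancel (Set.singleton_subset_iff.2 hw)
  have hSW : ∀ w ∈ W, Disjoint (sep w) W := by
    intro w hw
    have h := (hsepsep w hw).1
    rwa [hWeq w hw] at h
  have hCX : ∀ w ∈ W, ∀ u, u ∈ C w → u ∉ sep w := by
    intro w hw u hu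
    rw [hmemC] at hu
    have hwX : w ∉ sep w := fun h => Set.disjoint_left.mp (hSW w hw) h hw
    obtain ⟨p⟩ := hu
    exact removeVerts_walk_prop (P := fun x => x ∉ sep w)
      (fun p q _ _ hq _ => hq) p hwX
  have hwC : ∀ w, w ∈ C w := fun w => (hmemC w w).mpr (SimpleGraph.Reachable.refl w)
  have hCW : ∀ w ∈ W, ∀ t ∈ W, t ≠ w → t ∉ C w := by
    intro w hw t ht htw hmem
    exact (hsepsep w hw).2 w rfl t ⟨ht, by simpa using htw⟩ ((hmemC w t).mp hmem)
  have hclosed : ∀ w ∈ W, ∀ u z, u ∈ C w → G.Adj u z → z ∉ sep w → z ∈ C w := by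
    intro w hw u z hu ha hz
    have hu' := (hmemC w u).mp hu
    have huX : u ∉ sep w := hCX w hw u hu
    exact (hmemC w z).mpr
      (hu'.trans (SimpleGraph.Adj.reachable
        (show (removeVerts G (sep w)).Adj u z from ⟨ha, huX, hz⟩)))
  -- the pairwise exchange inequality
  have pair_le : ∀ i ∈ W, ∀ j ∈ W, i ≠ j →
      (sep j ∩ C i).ncard ≤ (sep i ∩ C j).ncard := by
    intro i hi j hj hij
    have hXsep : IsSeparator G {j} (W \ {j}) ((sep j \ C i) ∪ (sep i ∩ C j)) := by
      apply isSep_of_blocked G W j (C i ∪ (C j ∪ sep j)ᶜ)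
      · rw [hWeq j hj]
        refine Set.disjoint_left.mpr ?_
        rintro x (hx | hx) hxW
        · exact Set.disjoint_left.mp (hSW j hj) hx.1 hxW
        · exact Set.disjoint_left.mp (hSW i hi) hx.1 hxW
      · intro p z hpA hpX hzX hpz hzA
        have hpCi : p ∉ C i := fun h => hpA (Or.inl h)
        have hpB : p ∈ C j ∪ sep j := by
          by_contra h
          exact hpA (Or.inr h)
        rcases hzA with hz | hz
        · -- z ∈ C i
          have hpSi : p ∈ sep i := by
            by_contra hpSi
            exact hpCi (hclosed i hi z p hz hpz.symm hpSi)
          rcases hpB with hpCj | hpSj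
          · exact hpX (Or.inr ⟨hpSi, hpCj⟩)
          · exact hpX (Or.inl ⟨hpSj, hpCi⟩)
        · -- z ∈ (C j ∪ sep j)ᶜ
          rcases hpB with hpCj | hpSj
          · exact hz (Or.inl (hclosed j hj p z hpCj hpz (fun h => hz (Or.inr h))))
          · exact hpX (Or.inl ⟨hpSj, hpCi⟩)
      · rintro (h | h)
        · exact hCW i hi j hj (Ne.symm hij) h
        · exact h (Or.inl (hwC j))
      · intro t htW htj
        refine Or.inr ?_
        rintro (h | h)
        · exact hCW j hj t htW htj h
        · exact Set.disjoint_left.mp (hSW j hj) h htW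
    have hle := hmin j hj _ hXsep
    have hXle : ((sep j \ C i) ∪ (sep i ∩ C j)).ncard ≤
        (sep j \ C i).ncard + (sep i ∩ C j).ncard := Set.ncard_union_le _ _
    have hsplit := ncard_split (sep j) (C i)
    omega
  have pair_eq : ∀ i ∈ W, ∀ j ∈ W, i ≠ j →
      (sep j ∩ C i).ncard = (sep i ∩ C j).ncard :=
    fun i hi j hj hij => le_antisymm (pair_le i hi j hj hij) (pair_le j hj i hi (Ne.symm hij))
  -- the triple inequality
  have triple_le : ∀ i ∈ W, ∀ j ∈ W, ∀ k ∈ W, i ≠ j → j ≠ k → i ≠ k →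
      (sep i ∩ (C j ∩ C k)).ncard + (sep k ∩ (C i ∩ C j)).ncard +
        ((sep i ∩ sep k) ∩ C j).ncard ≤ (sep j ∩ (C i ∩ C k)).ncard := by
    intro i hi j hj k hk hij hjk hik
    have hXsep : IsSeparator G {j} (W \ {j})
        ((sep j \ (C i ∪ C k)) ∪
          (((sep i ∩ C j) \ (C i ∪ C k)) ∪ ((sep k ∩ C j) \ (C i ∪ C k)))) := by
      apply isSep_of_blocked G W j ((C i ∪ C k) ∪ (C j ∪ sep j)ᶜ)
      · rw [hWeq j hj]
        refine Set.disjoint_left.mpr ?_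
        rintro x (hx | hx | hx) hxW
        · exact Set.disjoint_left.mp (hSW j hj) hx.1 hxW
        · exact Set.disjoint_left.mp (hSW i hi) hx.1.1 hxW
        · exact Set.disjoint_left.mp (hSW k hk) hx.1.1 hxW
      · intro p z hpA hpX hzX hpz hzA
        have hpD : p ∉ C i ∪ C k := fun h => hpA (Or.inl h)
        have hpCi : p ∉ C i := fun h => hpD (Or.inl h)
        have hpCk : p ∉ C k := fun h => hpD (Or.inr h)
        have hpB : p ∈ C j ∪ sep j := by
          by_contra h
          exact hpA (Or.inr h)
        rcases hzA with hzD | hzB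
        · rcases hpB with hpCj | hpSj
          · rcases hzD with hz | hz
            · have hpSi : p ∈ sep i := by
                by_contra hpSi
                exact hpCi (hclosed i hi z p hz hpz.symm hpSi)
              exact hpX (Or.inr (Or.inl ⟨⟨hpSi, hpCj⟩, hpD⟩))
            · have hpSk : p ∈ sep k := by
                by_contra hpSk
                exact hpCk (hclosed k hk z p hz hpz.symm hpSk)
              exact hpX (Or.inr (Or.inr ⟨⟨hpSk, hpCj⟩, hpD⟩))
          · exact hpX (Or.inl ⟨hpSj, hpD⟩)
        · rcases hpB with hpCj | hpSj
          · exact hzB (Or.inl (hclosed j hj p z hpCj hpz (fun h => hzB (Or.inr h))))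
          · exact hpX (Or.inl ⟨hpSj, hpD⟩)
      · rintro ((h | h) | h)
        · exact hCW i hi j hj (Ne.symm hij) h
        · exact hCW k hk j hj hjk h
        · exact h (Or.inl (hwC j))
      · intro t htW htj
        refine Or.inr ?_
        rintro (h | h)
        · exact hCW j hj t htW htj h
        · exact Set.disjoint_left.mp (hSW j hj) h htW
    have hle := hmin j hj _ hXsep
    have hXle : ((sep j \ (C i ∪ C k)) ∪
          (((sep i ∩ C j) \ (C i ∪ C k)) ∪ ((sep k ∩ C j) \ (C i ∪ C k)))).ncard ≤
        (sep j \ (C i ∪ C k)).ncard +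
          (((sep i ∩ C j) \ (C i ∪ C k)) ∪ ((sep k ∩ C j) \ (C i ∪ C k))).ncard :=
      Set.ncard_union_le _ _
    have hPQ : (((sep i ∩ C j) \ (C i ∪ C k)) ∪ ((sep k ∩ C j) \ (C i ∪ C k))).ncard +
        (((sep i ∩ C j) \ (C i ∪ C k)) ∩ ((sep k ∩ C j) \ (C i ∪ C k))).ncard =
        ((sep i ∩ C j) \ (C i ∪ C k)).ncard + ((sep k ∩ C j) \ (C i ∪ C k)).ncard :=
      Set.ncard_union_add_ncard_inter _ _ (Set.toFinite _) (Set.toFinite _)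
    have hPQeq : ((sep i ∩ C j) \ (C i ∪ C k)) ∩ ((sep k ∩ C j) \ (C i ∪ C k)) =
        (sep i ∩ sep k) ∩ C j := by
      ext u
      constructor
      · rintro ⟨⟨⟨h1, h2⟩, -⟩, ⟨⟨h3, -⟩, -⟩⟩
        exact ⟨⟨h1, h3⟩, h2⟩
      · rintro ⟨⟨h1, h3⟩, h2⟩
        have hD : u ∉ C i ∪ C k := by
          rintro (h | h)
          · exact hCX i hi u h h1
          · exact hCX k hk u h h3
        exact ⟨⟨⟨h1, h2⟩, hD⟩, ⟨⟨h3, h2⟩, hD⟩⟩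
    have hsplit1 := ncard_split (sep j) (C i ∪ C k)
    have hsplit2 : (sep j ∩ (C i ∪ C k)).ncard + (sep j ∩ (C i ∩ C k)).ncard =
        (sep j ∩ C i).ncard + (sep j ∩ C k).ncard := by
      have e1 : sep j ∩ (C i ∪ C k) = (sep j ∩ C i) ∪ (sep j ∩ C k) :=
        Set.inter_union_distrib_left _ _ _
      have e2 : (sep j ∩ C i) ∩ (sep j ∩ C k) = sep j ∩ (C i ∩ C k) := by
        ext u; constructor
        · rintro ⟨⟨h1, h2⟩, ⟨-, h3⟩⟩; exact ⟨h1, h2, h3⟩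
        · rintro ⟨h1, h2, h3⟩; exact ⟨⟨h1, h2⟩, h1, h3⟩
      rw [e1, ← e2]
      exact Set.ncard_union_add_ncard_inter _ _ (Set.toFinite _) (Set.toFinite _)
    have hsplitP : ((sep i ∩ C j) \ (C i ∪ C k)).ncard + (sep i ∩ (C j ∩ C k)).ncard =
        (sep i ∩ C j).ncard := by
      have e : (sep i ∩ C j) ∩ (C i ∪ C k) = sep i ∩ (C j ∩ C k) := by
        ext u; constructor
        · rintro ⟨⟨h1, h2⟩, (h | h)⟩
          · exact absurd h1 (hCX i hi u h)
          · exact ⟨h1, h2, h⟩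
        · rintro ⟨h1, h2, h3⟩; exact ⟨⟨h1, h2⟩, Or.inr h3⟩
      rw [← e]
      exact ncard_split _ _
    have hsplitQ : ((sep k ∩ C j) \ (C i ∪ C k)).ncard + (sep k ∩ (C i ∩ C j)).ncard =
        (sep k ∩ C j).ncard := by
      have e : (sep k ∩ C j) ∩ (C i ∪ C k) = sep k ∩ (C i ∩ C j) := by
        ext u; constructor
        · rintro ⟨⟨h1, h2⟩, (h | h)⟩
          · exact ⟨h1, h, h2⟩
          · exact absurd h1 (hCX k hk u h)
        · rintro ⟨h1, h2, h3⟩; exact ⟨⟨h1, h3⟩, Or.inl h2⟩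
      rw [← e]
      exact ncard_split _ _
    have hp1 := pair_eq i hi j hj hij
    have hp2 := pair_eq k hk j hj (Ne.symm hjk)
    rw [hPQeq] at hPQ
    omega
  -- main argument
  intro R hRW hR3
  rw [Set.eq_empty_iff_forall_notMem]
  intro v hv
  -- pick three distinct terminals in R
  obtain ⟨a, ha⟩ : R.Nonempty := Set.nonempty_of_ncard_ne_zero (by omega)
  have h1 : (R \ {a}).ncard = R.ncard - 1 := Set.ncard_diff_singleton_of_mem ha
  obtain ⟨b, hb⟩ : (R \ {a}).Nonempty := Set.nonempty_of_ncard_ne_zero (by omega)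
  have h2 : ((R \ {a}) \ {b}).ncard = (R \ {a}).ncard - 1 :=
    Set.ncard_diff_singleton_of_mem hb
  obtain ⟨c, hc⟩ : ((R \ {a}) \ {b}).Nonempty := Set.nonempty_of_ncard_ne_zero (by omega)
  have haR : a ∈ R := ha
  have hbR : b ∈ R := hb.1
  have hcR : c ∈ R := hc.1.1
  have hba : b ≠ a := by simpa using hb.2
  have hcb : c ≠ b := by simpa using hc.2
  have hca : c ≠ a := by simpa using hc.1.2
  have haW := hRW haR
  have hbW := hRW hbR
  have hcW := hRW hcR
  -- v belongs to the three reach sets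
  have hvI : ∀ w ∈ R, v ∈ FC w := by
    have h := hv.1
    simpa using h
  have hva : v ∈ C a := by
    have := hvI a haR; rwa [hFC a haW] at this
  have hvb : v ∈ C b := by
    have := hvI b hbR; rwa [hFC b hbW] at this
  have hvc : v ∈ C c := by
    have := hvI c hcR; rwa [hFC c hcW] at this
  -- the six small sets are empty
  have T1 := triple_le a haW b hbW c hcW (Ne.symm hba) (Ne.symm hcb) (Ne.symm hca)
  have T2 := triple_le b hbW a haW c hcW hba (Ne.symm hca) (Ne.symm hcb)
  have T3 := triple_le a haW c hcW b hbW (Ne.symm hca) hcb (Ne.symm hba)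
  rw [Set.inter_comm (C b) (C a)] at T2
  rw [Set.inter_comm (C c) (C b)] at T3
  have hxA : (sep a ∩ (C b ∩ C c)).ncard = 0 := by omega
  have hxC : (sep c ∩ (C a ∩ C b)).ncard = 0 := by omega
  have hyB : ((sep a ∩ sep c) ∩ C b).ncard = 0 := by omega
  have eA : sep a ∩ (C b ∩ C c) = ∅ := (Set.ncard_eq_zero (Set.toFinite _)).mp hxA
  have eC : sep c ∩ (C a ∩ C b) = ∅ := (Set.ncard_eq_zero (Set.toFinite _)).mp hxC
  have eB : (sep a ∩ sep c) ∩ C b = ∅ := (Set.ncard_eq_zero (Set.toFinite _)).mp hyB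
  -- walk from b to v crosses into C a ∩ C c
  have hbP : b ∉ C a ∩ C c := fun h => hCW a haW b hbW hba h.1
  obtain ⟨p⟩ := (hmemC b v).mp hvb
  obtain ⟨u, z, hadj, hru, huP, hzP⟩ := walk_cross p hbP ⟨hva, hvc⟩
  have huCb : u ∈ C b := (hmemC b u).mpr hru
  have hGuz : G.Adj u z := hadj.1
  have hzCa : z ∈ C a := hzP.1
  have hzCc : z ∈ C c := hzP.2
  by_cases huCa : u ∈ C a
  · have huCc : u ∉ C c := fun h => huP ⟨huCa, h⟩
    have huSc : u ∈ sep c := by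
      by_contra h
      exact huCc (hclosed c hcW z u hzCc hGuz.symm h)
    have : u ∈ sep c ∩ (C a ∩ C b) := ⟨huSc, huCa, huCb⟩
    rw [eC] at this
    exact this
  · have huSa : u ∈ sep a := by
      by_contra h
      exact huCa (hclosed a haW z u hzCa hGuz.symm h)
    by_cases huCc : u ∈ C c
    · have : u ∈ sep a ∩ (C b ∩ C c) := ⟨huSa, huCb, huCc⟩
      rw [eA] at this
      exact this
    · have huSc : u ∈ sep c := by
        by_contra h
        exact huCc (hclosed c hcW z u hzCc hGuz.symm h)
      have : u ∈ (sep a ∩ sep c) ∩ C b := ⟨⟨huSa, huSc⟩, huCb⟩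
      rw [eB] at this
      exact this
end
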